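/- arXiv:2409.03370 — 6 statements merged into one kernel-verified Lean document; each statement's English description precedes it below -/
import Mathlib

section
/- Monotonicity of the EM iteration (Lemma 1, finite-latent form): for any two parameters θ and θ₀, if Q θ θ₀ ≥ Q θ₀ θ₀ then log (L θ) ≥ log (L θ₀). -/
/-- Monotonicity of the EM iteration: if the EM objective does not decrease,
then the log-likelihood does not decrease. -/
theorem em_monotone {S : Type*} [Fintype S] [Nonempty S] {Θ : Type*}
    (p : Θ → S → ℝ) (hp : ∀ θ x, 0 < p θ x)
    (L : Θ → ℝ) (hL : ∀ θ, L θ = ∑ x, p θ x)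
    (Q : Θ → Θ → ℝ)
    (hQ : ∀ θ θ', Q θ θ' = ∑ x, (p θ' x / L θ') * Real.log (p θ x))
    (θ θ₀ : Θ) (h : Q θ θ₀ ≥ Q θ₀ θ₀) :
    Real.log (L θ) ≥ Real.log (L θ₀) := by
  have hLpos : ∀ θ', 0 < L θ' := fun θ' => by
    rw [hL]; exact Finset.sum_pos (fun x _ => hp θ' x) Finset.univ_nonempty
  set w : S → ℝ := fun x => p θ₀ x / L θ₀ with hw
  set q : S → ℝ := fun x => p θ x / L θ with hq
  have hwpos : ∀ x, 0 < w x := fun x => div_pos (hp θ₀ x) (hLpos θ₀)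
  have hqpos : ∀ x, 0 < q x := fun x => div_pos (hp θ x) (hLpos θ)
  have hwsum : ∑ x, w x = 1 := by
    rw [hw]; rw [← Finset.sum_div, ← hL, div_self (hLpos θ₀).ne']
  have hqsum : ∑ x, q x = 1 := by
    rw [hq]; rw [← Finset.sum_div, ← hL, div_self (hLpos θ).ne']
  -- Gibbs: ∑ w log (q/w) ≤ 0
  have gibbs : ∑ x, w x * Real.log (q x / w x) ≤ 0 := by
    have step : ∀ x, w x * Real.log (q x / w x) ≤ q x - w x := by
      intro x
      have h1 : Real.log (q x / w x) ≤ q x / w x - 1 :=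
        Real.log_le_sub_one_of_pos (div_pos (hqpos x) (hwpos x))
      have := mul_le_mul_of_nonneg_left h1 (hwpos x).le
      calc w x * Real.log (q x / w x) ≤ w x * (q x / w x - 1) := this
        _ = q x - w x := by rw [mul_sub, mul_one, mul_div_cancel₀ _ (hwpos x).ne']
    calc ∑ x, w x * Real.log (q x / w x) ≤ ∑ x, (q x - w x) :=
          Finset.sum_le_sum (fun x _ => step x)
      _ = 0 := by rw [Finset.sum_sub_distrib, hwsum, hqsum]; ring
  -- identity: ∑ w log(q/w) = (Q θ θ₀ - Q θ₀ θ₀) - (log L θ - log L θ₀)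
  have iden : ∑ x, w x * Real.log (q x / w x)
      = (Q θ θ₀ - Q θ₀ θ₀) - (Real.log (L θ) - Real.log (L θ₀)) := by
    rw [hQ, hQ, ← Finset.sum_sub_distrib]
    have : Real.log (L θ) - Real.log (L θ₀)
        = ∑ x, w x * (Real.log (L θ) - Real.log (L θ₀)) := by
      rw [← Finset.sum_mul, hwsum, one_mul]
    rw [this, ← Finset.sum_sub_distrib]
    apply Finset.sum_congr rfl
    intro x _
    have hlq : Real.log (q x / w x)
        = Real.log (p θ x) - Real.log (L θ) - (Real.log (p θ₀ x) - Real.log (L θ₀)) := by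
      rw [hq, hw]
      rw [Real.log_div (div_pos (hp θ x) (hLpos θ)).ne' (div_pos (hp θ₀ x) (hLpos θ₀)).ne',
        Real.log_div (hp θ x).ne' (hLpos θ).ne', Real.log_div (hp θ₀ x).ne' (hLpos θ₀).ne']
    rw [hlq]; ring
  linarith [gibbs, iden]
end

section
/- Decomposition of the log-likelihood: for all parameters θ and θ', Q θ θ' = Real.log (L θ) + V θ θ'. -/
/-- Decomposition of the log-likelihood: Q θ θ' = log (L θ) + V θ θ'. -/
theorem em_decomposition {S : Type*} [Fintype S] [Nonempty S] {Θ : Type*}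
    (p : Θ → S → ℝ) (hp : ∀ θ x, 0 < p θ x)
    (L : Θ → ℝ) (hL : ∀ θ, L θ = ∑ x, p θ x)
    (Q : Θ → Θ → ℝ)
    (hQ : ∀ θ θ', Q θ θ' = ∑ x, (p θ' x / L θ') * Real.log (p θ x))
    (V : Θ → Θ → ℝ)
    (hV : ∀ θ θ', V θ θ' = ∑ x, (p θ' x / L θ') * Real.log (p θ x / L θ))
    (θ θ' : Θ) :
    Q θ θ' = Real.log (L θ) + V θ θ' := by
  have hLpos : ∀ t, 0 < L t := fun t => by
    rw [hL]; exact Finset.sum_pos (fun x _ => hp t x) Finset.univ_nonempty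
  have hsum : ∑ x, p θ' x / L θ' = 1 := by
    rw [← Finset.sum_div, ← hL, div_self (hLpos θ').ne']
  rw [hQ, hV]
  have : ∀ x : S, (p θ' x / L θ') * Real.log (p θ x / L θ)
      = (p θ' x / L θ') * Real.log (p θ x) - (p θ' x / L θ') * Real.log (L θ) := by
    intro x
    rw [Real.log_div (hp θ x).ne' (hLpos θ).ne', mul_sub]
  simp only [this, Finset.sum_sub_distrib, ← Finset.sum_mul, hsum, one_mul]
  ring
end

section
/- Log-det/trace inequality underlying the Gaussian covariance M-step: let Σ and S be n × n real matrices that are both symmetric positive definite. Then Real.log (Matrix.det Σ) + Matrix.trace (Σ⁻¹ * S) ≥ Real.log (Matrix.det S) + n. -/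
/-!
With `C = √(Σ⁻¹)`, the matrix `B = C S C` is positive definite, has the trace of `Σ⁻¹ S` and
determinant `det S / det Σ`. Summing `log λ ≤ λ - 1` over the eigenvalues of `B` gives
`log det B ≤ tr B - n`, which is the inequality.
-/

open scoped MatrixOrder ComplexOrder

namespace Matrix

variable {n : Type*} [Fintype n] [DecidableEq n]

theorem PosDef.log_det_le_trace_sub_card {A : Matrix n n ℝ} (hA : A.PosDef) :
    Real.log A.det ≤ A.trace - Fintype.card n := by
  have hpos := hA.eigenvalues_pos
  rw [hA.isHermitian.det_eq_prod_eigenvalues, hA.isHermitian.trace_eq_sum_eigenvalues]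
  simp only [RCLike.ofReal_real_eq_id, id_eq]
  rw [Real.log_prod fun i _ ↦ (hpos i).ne']
  calc ∑ i, Real.log (hA.isHermitian.eigenvalues i)
      ≤ ∑ i, (hA.isHermitian.eigenvalues i - 1) :=
        Finset.sum_le_sum fun i _ ↦ Real.log_le_sub_one_of_pos (hpos i)
    _ = _ := by simp [Finset.sum_sub_distrib]

theorem PosDef.sqrt_mul_mul_sqrt {𝕜 : Type*} [RCLike 𝕜] {P Q : Matrix n n 𝕜}
    (hP : P.PosDef) (hQ : Q.PosDef) : (CFC.sqrt P * Q * CFC.sqrt P).PosDef := by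
  have hC : (CFC.sqrt P).PosDef := isStrictlyPositive_iff_posDef.mp (hP.isStrictlyPositive.sqrt)
  simpa only [hC.isHermitian.eq] using
    hQ.conjTranspose_mul_mul_same (mulVec_injective_iff_isUnit.mpr hC.isUnit)

theorem PosDef.log_det_mul_le_trace_mul_sub_card {P Q : Matrix n n ℝ}
    (hP : P.PosDef) (hQ : Q.PosDef) :
    Real.log (P.det * Q.det) ≤ (P * Q).trace - Fintype.card n := by
  set C := CFC.sqrt P
  have hCC : C * C = P := CFC.sqrt_mul_sqrt_self P hP.posSemidef.nonneg
  have hdet : (C * Q * C).det = P.det * Q.det := by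
    rw [det_mul, det_mul, mul_right_comm, ← det_mul, hCC]
  have htrace : (C * Q * C).trace = (P * Q).trace := by
    rw [trace_mul_comm, ← mul_assoc, hCC]
  rw [← hdet, ← htrace]
  exact (hP.sqrt_mul_mul_sqrt hQ).log_det_le_trace_sub_card

end Matrix

/-- Log-det/trace inequality underlying the Gaussian covariance M-step. -/
theorem logdet_trace_inequality (n : ℕ)
    (Sg S : Matrix (Fin n) (Fin n) ℝ) (hSg : Sg.PosDef) (hS : S.PosDef) :
    Real.log (Matrix.det Sg) + Matrix.trace (Sg⁻¹ * S) ≥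
      Real.log (Matrix.det S) + n := by
  have key := hSg.inv.log_det_mul_le_trace_mul_sub_card hS
  rw [Matrix.det_nonsing_inv, Ring.inverse_eq_inv', Real.log_mul (inv_ne_zero hSg.det_pos.ne')
    hS.det_pos.ne', Real.log_inv, Fintype.card_fin] at key
  linarith
end

section
/- Optimality of the weighted sample covariance: let r : Fin T → (Fin n → ℝ) be residual vectors and w : Fin T → ℝ nonnegative weights with W = ∑_t w t > 0. Define S* : Matrix (Fin n) (Fin n) ℝ by S* i j = (∑_t w t * r t i * r t j) / W and assume S* is positive definite. Then for every symmetric positive definite Σ : Matrix (Fin n) (Fin n) ℝ, W * Real.log (Matrix.det Σ) + ∑_t w t * (r t ⬝ᵥ (Σ⁻¹.mulVec (r t))) ≥ W * Real.log (Matrix.det S*) + W * n. -/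
/-!
Writing `S` for the weighted sample covariance, the weighted quadratic forms add up to
`W * tr (Σ⁻¹ S)`, so it suffices that `log det S + n ≤ log det Σ + tr (Σ⁻¹ S)`. Factor `S = Bᴴ B`
with `B` invertible: then `A = B Σ⁻¹ Bᴴ` is positive definite with `tr A = tr (Σ⁻¹ S)` and
`det A = det S / det Σ`, and summing `log λ + 1 ≤ λ` over the eigenvalues of `A` gives
`log det A + n ≤ tr A`.
-/

open Matrix

namespace Matrix

variable {m ι R : Type*} [Fintype m]

theorem sum_mul_dotProduct_mulVec_eq_trace [Fintype ι] [CommSemiring R] (M : Matrix m m R)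
    (w : ι → R) (r : ι → m → R) :
    ∑ t, w t * (r t ⬝ᵥ M *ᵥ r t) = (M * ∑ t, w t • vecMulVec (r t) (r t)).trace := by
  simp only [Matrix.mul_sum, mul_smul_comm, trace_sum, trace_smul, mul_vecMulVec,
    trace_vecMulVec, dotProduct_comm (M *ᵥ _), smul_eq_mul]

variable [DecidableEq m]

theorem PosDef.log_det_add_card_le_trace {A : Matrix m m ℝ} (hA : A.PosDef) :
    Real.log A.det + Fintype.card m ≤ A.trace := by
  have hpos := hA.eigenvalues_pos
  rw [hA.isHermitian.det_eq_prod_eigenvalues, hA.isHermitian.trace_eq_sum_eigenvalues]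
  simp only [RCLike.ofReal_real_eq_id, id]
  calc Real.log (∏ i, hA.isHermitian.eigenvalues i) + Fintype.card m
      = ∑ i, (Real.log (hA.isHermitian.eigenvalues i) + 1) := by
        simp [Real.log_prod fun i _ => (hpos i).ne', Finset.sum_add_distrib]
    _ ≤ ∑ i, hA.isHermitian.eigenvalues i :=
        Finset.sum_le_sum fun i _ => by linarith [Real.log_le_sub_one_of_pos (hpos i)]

open scoped MatrixOrder in
theorem PosDef.log_det_add_card_le_log_det_add_trace_inv_mul {S Sg : Matrix m m ℝ}
    (hS : S.PosDef) (hSg : Sg.PosDef) :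
    Real.log S.det + Fintype.card m ≤ Real.log Sg.det + (Sg⁻¹ * S).trace := by
  obtain ⟨B, hB, rfl⟩ :=
    CStarAlgebra.isStrictlyPositive_iff_eq_star_mul_self.mp hS.isStrictlyPositive
  rw [star_eq_conjTranspose] at hS ⊢
  have hA : (B * Sg⁻¹ * Bᴴ).PosDef :=
    hSg.inv.mul_mul_conjTranspose_same (vecMul_injective_iff_isUnit.mpr hB)
  have htrace : (B * Sg⁻¹ * Bᴴ).trace = (Sg⁻¹ * (Bᴴ * B)).trace := by
    rw [trace_mul_cycle, trace_mul_comm]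
  have hdet : (B * Sg⁻¹ * Bᴴ).det = (Bᴴ * B).det / Sg.det := by
    rw [det_mul, det_mul, det_mul, det_nonsing_inv, Ring.inverse_eq_inv']
    ring
  have hlog : Real.log (B * Sg⁻¹ * Bᴴ).det = Real.log (Bᴴ * B).det - Real.log Sg.det := by
    rw [hdet, Real.log_div hS.det_pos.ne' hSg.det_pos.ne']
  linarith [hA.log_det_add_card_le_trace]

end Matrix

theorem weighted_sample_covariance_optimal_general (T n : ℕ)
    (r : Fin T → Fin n → ℝ) (w : Fin T → ℝ)
    (W : ℝ) (hWpos : 0 < W)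
    (Sstar : Matrix (Fin n) (Fin n) ℝ)
    (hSstar : ∀ i j, Sstar i j = (∑ t, w t * r t i * r t j) / W)
    (hSstarPD : Sstar.PosDef)
    (Sg : Matrix (Fin n) (Fin n) ℝ) (hSgPD : Sg.PosDef) :
    W * Real.log (Matrix.det Sg) + ∑ t, w t * (r t ⬝ᵥ Sg⁻¹.mulVec (r t)) ≥
      W * Real.log (Matrix.det Sstar) + W * n := by
  have hscatter : W • Sstar = ∑ t, w t • vecMulVec (r t) (r t) := by
    ext i j
    simp [hSstar, Matrix.sum_apply, vecMulVec_apply, mul_div_cancel₀ _ hWpos.ne', mul_assoc]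
  have key := hSstarPD.log_det_add_card_le_log_det_add_trace_inv_mul hSgPD
  rw [Fintype.card_fin] at key
  rw [sum_mul_dotProduct_mulVec_eq_trace, ← hscatter, mul_smul_comm, trace_smul, smul_eq_mul]
  linarith [mul_le_mul_of_nonneg_left key hWpos.le]

/-- Optimality of the weighted sample covariance for the Gaussian
negative log-likelihood. -/
theorem weighted_sample_covariance_optimal (T n : ℕ)
    (r : Fin T → Fin n → ℝ) (w : Fin T → ℝ) (hw : ∀ t, 0 ≤ w t)
    (W : ℝ) (hW : W = ∑ t, w t) (hWpos : 0 < W)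
    (Sstar : Matrix (Fin n) (Fin n) ℝ)
    (hSstar : ∀ i j, Sstar i j = (∑ t, w t * r t i * r t j) / W)
    (hSstarPD : Sstar.PosDef)
    (Sg : Matrix (Fin n) (Fin n) ℝ) (hSgPD : Sg.PosDef) :
    W * Real.log (Matrix.det Sg) + ∑ t, w t * (r t ⬝ᵥ Sg⁻¹.mulVec (r t)) ≥
      W * Real.log (Matrix.det Sstar) + W * n :=
  weighted_sample_covariance_optimal_general T n r w W hWpos Sstar hSstar hSstarPD Sg hSgPD
end

section
/- Trace-optimality of the Kalman gain: let P : Matrix (Fin nc) (Fin nc) ℝ be symmetric, C : Matrix (Fin ny) (Fin nc) ℝ, and S : Matrix (Fin ny) (Fin ny) ℝ symmetric positive definite. Define f(K) = P - P * Cᵀ * Kᵀ - K * C * P + K * S * Kᵀ and K* = P * Cᵀ * S⁻¹. Then for every K : Matrix (Fin nc) (Fin ny) ℝ, Matrix.trace (f(K*)) ≤ Matrix.trace (f(K)); i.e., K* minimizes the trace of the posterior error covariance over all gains. -/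
/-!
Completing the square: if `K₀ S = P Cᵀ` then
`f K = f K₀ + (K - K₀) S (K - K₀)ᵀ`, and the correction term is positive semidefinite
because `S` is, so its trace is nonnegative. The Kalman gain `P Cᵀ S⁻¹` satisfies `K₀ S = P Cᵀ`.
-/

open Matrix

namespace Matrix

variable {m n R : Type*} [Fintype m] [Fintype n]

def posteriorCov [CommRing R] (P : Matrix n n R) (C : Matrix m n R) (S : Matrix m m R)
    (K : Matrix n m R) : Matrix n n R :=
  P - P * Cᵀ * Kᵀ - K * C * P + K * S * Kᵀ

theorem posteriorCov_eq_add_of_mul_eq [CommRing R] {P : Matrix n n R} {C : Matrix m n R}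
    {S : Matrix m m R} (hP : P.IsSymm) (hS : S.IsSymm) {K₀ : Matrix n m R}
    (hK₀ : K₀ * S = P * Cᵀ) (K : Matrix n m R) :
    posteriorCov P C S K = posteriorCov P C S K₀ + (K - K₀) * S * (K - K₀)ᵀ := by
  have hK₀' : C * P = S * K₀ᵀ := by
    rw [← hS.eq, ← transpose_mul, hK₀, transpose_mul, transpose_transpose, hP.eq]
  simp only [posteriorCov, Matrix.mul_assoc, hK₀', ← hK₀, transpose_sub, Matrix.mul_sub,
    Matrix.sub_mul]
  abel

theorem trace_posteriorCov_le_of_mul_eq {P : Matrix n n ℝ} {C : Matrix m n ℝ}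
    {S : Matrix m m ℝ} (hP : P.IsSymm) (hS : S.PosSemidef) {K₀ : Matrix n m ℝ}
    (hK₀ : K₀ * S = P * Cᵀ) (K : Matrix n m ℝ) :
    (posteriorCov P C S K₀).trace ≤ (posteriorCov P C S K).trace := by
  have hS_symm : S.IsSymm := by simpa using hS.isHermitian
  have h_corr : ((K - K₀) * S * (K - K₀)ᵀ).PosSemidef := by
    simpa using hS.mul_mul_conjTranspose_same (K - K₀)
  rw [posteriorCov_eq_add_of_mul_eq hP hS_symm hK₀ K, trace_add]
  exact le_add_of_nonneg_right h_corr.trace_nonneg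

end Matrix

/-- Trace-optimality of the Kalman gain. -/
theorem kalman_gain_trace_optimal (nc ny : ℕ)
    (P : Matrix (Fin nc) (Fin nc) ℝ) (hP : P.IsSymm)
    (C : Matrix (Fin ny) (Fin nc) ℝ)
    (S : Matrix (Fin ny) (Fin ny) ℝ) (hS : S.PosDef)
    (f : Matrix (Fin nc) (Fin ny) ℝ → Matrix (Fin nc) (Fin nc) ℝ)
    (hf : ∀ K, f K = P - P * Cᵀ * Kᵀ - K * C * P + K * S * Kᵀ)
    (Kstar : Matrix (Fin nc) (Fin ny) ℝ) (hKstar : Kstar = P * Cᵀ * S⁻¹)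
    (K : Matrix (Fin nc) (Fin ny) ℝ) :
    Matrix.trace (f Kstar) ≤ Matrix.trace (f K) := by
  obtain rfl : f = posteriorCov P C S := funext hf
  have hKstar_mul : Kstar * S = P * Cᵀ := by
    rw [hKstar, nonsing_inv_mul_cancel_right _ _ ((isUnit_iff_isUnit_det S).mp hS.isUnit)]
  exact trace_posteriorCov_le_of_mul_eq hP hS.posSemidef hKstar_mul K
end

section
/- Positive-semidefinite lower bound on the sample Gram matrix of a backward switched recursion: let s be a finite set of natural numbers, A : ℕ → Matrix (Fin n) (Fin n) ℝ, and x, v : ℕ → (Fin n → ℝ) satisfy x t = (A t).mulVec (x (t+1)) + v t for every t ∈ s. Define the outer product (a ⊗ b) i j = a i * b j for vectors a, b : Fin n → ℝ. Then the matrix (∑_{t ∈ s} x t ⊗ x t) - (∑_{t ∈ s} v t ⊗ v t) - ∑_{t ∈ s} (A t * (x (t+1) ⊗ v t) + (A t * (x (t+1) ⊗ v t))ᵀ) is positive semidefinite. -/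
open Matrix

/-! Substituting `x t = A t y + v t` with `y = x (t + 1)`, the `t`-th summand collapses to
`(A t y)(A t y)ᵀ`, so the matrix is a sum of rank-one positive semidefinite matrices. -/

theorem Matrix.vecMulVec_add_self_sub {m R : Type*} [CommRing R] (u w : m → R) :
    vecMulVec (u + w) (u + w) - vecMulVec w w - (vecMulVec u w + (vecMulVec u w)ᵀ) =
      vecMulVec u u := by
  rw [add_vecMulVec, vecMulVec_add, vecMulVec_add, transpose_vecMulVec]
  abel

/-- Positive-semidefinite lower bound on the sample Gram matrix of a
backward switched recursion. -/
theorem gram_matrix_psd_lower_bound (n : ℕ) (s : Finset ℕ)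
    (A : ℕ → Matrix (Fin n) (Fin n) ℝ) (x v : ℕ → Fin n → ℝ)
    (hx : ∀ t ∈ s, x t = (A t).mulVec (x (t + 1)) + v t)
    (outer : (Fin n → ℝ) → (Fin n → ℝ) → Matrix (Fin n) (Fin n) ℝ)
    (houter : ∀ a b i j, outer a b i j = a i * b j) :
    ((∑ t ∈ s, outer (x t) (x t)) - (∑ t ∈ s, outer (v t) (v t)) -
        ∑ t ∈ s, (A t * outer (x (t + 1)) (v t) +
          (A t * outer (x (t + 1)) (v t))ᵀ)).PosSemidef := by
  obtain rfl : outer = vecMulVec := by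
    funext a b
    ext i j
    exact houter a b i j
  have hterm : ∀ t ∈ s, vecMulVec (x t) (x t) - vecMulVec (v t) (v t) -
      (A t * vecMulVec (x (t + 1)) (v t) + (A t * vecMulVec (x (t + 1)) (v t))ᵀ) =
      vecMulVec (A t *ᵥ x (t + 1)) (A t *ᵥ x (t + 1)) := fun t ht => by
    rw [hx t ht, mul_vecMulVec, vecMulVec_add_self_sub]
  rw [← Finset.sum_sub_distrib, ← Finset.sum_sub_distrib, Finset.sum_congr rfl hterm]
  exact posSemidef_sum s fun t _ => by
    simpa using posSemidef_vecMulVec_self_star (A t *ᵥ x (t + 1))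
end
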